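/- Let p be an odd prime, a ∈ ℤ with p ∤ a, and let u, w ∈ ℚ_p satisfy u + w = a, u·w = p with u a p-adic unit. Set N = 1 − a + p. Then the p-adic valuation of ((1 − u⁻¹)/(1 − w⁻¹)) · (1 − a/p + 1/p) equals 2·v_p(N). -/

import Mathlib

/-!
Eliminating `a = u + w` and `p = u w`, the quantity is the square `((1 - u) / u) ^ 2`, while
`N = (1 - u)(1 - w)`. Since `‖u‖ = 1` forces `‖w‖ = ‖p‖ < 1`, both `u` and `1 - w` are units,
so `(1 - u) / u` and `N` have the same norm, hence the same valuation.
-/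

theorem one_sub_inv_div_one_sub_inv_mul_eq_sq {K : Type*} [Field K] {u w : K} (hu : u ≠ 0)
    (hw : w ≠ 0) (hw1 : w ≠ 1) :
    (1 - u⁻¹) / (1 - w⁻¹) * (1 - (u + w) / (u * w) + 1 / (u * w)) = ((1 - u) / u) ^ 2 := by
  have hw1' : w - 1 ≠ 0 := sub_ne_zero.2 hw1
  field_simp
  ring

theorem norm_one_sub_eq_one_of_norm_lt_one {R : Type*} [SeminormedRing R] [NormOneClass R]
    [IsUltrametricDist R] {w : R} (hw : ‖w‖ < 1) : ‖1 - w‖ = 1 := by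
  have hne : ‖(1 : R)‖ ≠ ‖-w‖ := by rw [norm_one, norm_neg]; exact hw.ne'
  rw [sub_eq_add_neg, IsUltrametricDist.norm_add_eq_max_of_norm_ne_norm hne, norm_one, norm_neg,
    max_eq_left hw.le]

namespace Padic

variable {p : ℕ} [Fact p.Prime]

theorem valuation_eq_of_norm_eq {x y : ℚ_[p]} (h : ‖x‖ = ‖y‖) : x.valuation = y.valuation := by
  obtain rfl | hx := eq_or_ne x 0
  · rw [norm_zero, eq_comm, norm_eq_zero] at h
    rw [h]
  have hy : y ≠ 0 := norm_ne_zero_iff.1 (h ▸ norm_ne_zero_iff.2 hx)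
  have hp : (1 : ℝ) < p := mod_cast (Fact.out : p.Prime).one_lt
  rw [norm_eq_zpow_neg_valuation hx, norm_eq_zpow_neg_valuation hy,
    zpow_right_inj₀ (zero_lt_one.trans hp) hp.ne', neg_inj] at h
  exact h

theorem norm_lt_one_of_mul_eq_p {u w : ℚ_[p]} (hprod : u * w = p) (hu : ‖u‖ = 1) : ‖w‖ < 1 := by
  have hw : ‖w‖ = (p : ℝ)⁻¹ := by rw [← norm_p, ← hprod, norm_mul, hu, one_mul]
  exact hw ▸ inv_lt_one_of_one_lt₀ (mod_cast (Fact.out : p.Prime).one_lt)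

end Padic

theorem valuation_unit_root_factor_general (p : ℕ) [Fact p.Prime] (a : ℤ)
    (u w : ℚ_[p]) (hsum : u + w = (a : ℚ_[p]))
    (hprod : u * w = (p : ℚ_[p])) (hu : ‖u‖ = 1) :
    ((1 - u⁻¹) / (1 - w⁻¹) * (1 - (a : ℚ_[p]) / (p : ℚ_[p]) + 1 / (p : ℚ_[p]))).valuation =
      2 * (((1 - a + p : ℤ) : ℚ_[p])).valuation := by
  have hw : ‖w‖ < 1 := Padic.norm_lt_one_of_mul_eq_p hprod hu
  have hu0 : u ≠ 0 := norm_ne_zero_iff.1 (by rw [hu]; exact one_ne_zero)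
  have hw0 : w ≠ 0 := by
    rintro rfl
    exact (Fact.out : p.Prime).ne_zero (by simpa using hprod.symm)
  have hw1 : w ≠ 1 := by
    rintro rfl
    simp at hw
  have hnorm : ‖(1 - u) / u‖ = ‖((1 - a + p : ℤ) : ℚ_[p])‖ := by
    have hN : ((1 - a + p : ℤ) : ℚ_[p]) = (1 - u) * (1 - w) := by
      push_cast
      rw [← hsum, ← hprod]
      ring
    rw [hN, norm_mul, norm_div, hu, norm_one_sub_eq_one_of_norm_lt_one hw, div_one, mul_one]
  rw [← hsum, ← hprod, one_sub_inv_div_one_sub_inv_mul_eq_sq hu0 hw0 hw1, Padic.valuation_pow,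
    Padic.valuation_eq_of_norm_eq hnorm, Nat.cast_ofNat]

/-- Lemma 4.6 of the paper (case δ = 1): with `u, w` the unit and non-unit roots of
`1 - aT + pT²` and `N = 1 - a + p`, the `p`-adic valuation of
`((1 - u⁻¹)/(1 - w⁻¹)) · (1 - a/p + 1/p)` equals `2 v_p(N)`. -/
theorem valuation_unit_root_factor (p : ℕ) [Fact p.Prime] (hp : Odd p) (a : ℤ)
    (ha : ¬ (p : ℤ) ∣ a) (u w : ℚ_[p]) (hsum : u + w = (a : ℚ_[p]))
    (hprod : u * w = (p : ℚ_[p])) (hu : ‖u‖ = 1) :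
    ((1 - u⁻¹) / (1 - w⁻¹) * (1 - (a : ℚ_[p]) / (p : ℚ_[p]) + 1 / (p : ℚ_[p]))).valuation =
      2 * (((1 - a + p : ℤ) : ℚ_[p])).valuation :=
  valuation_unit_root_factor_general p a u w hsum hprod hu
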